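/- arXiv:0806.0463 — 3 statements merged into one kernel-verified Lean document; each statement's English description precedes it below -/
import Mathlib

section
/- For every m ≥ 0 and N ≥ 0, the sum of t^{2(|Y| + m − m(m+1)/2 − l(Y))} over all pairs (Y,S) with Y a Young diagram, S a set of m removable boxes of Y and |Y| = N + m(m+1)/2, equals the sum of t^{2(|Y¹| + |Y²| − l(Y¹))} over all pairs of Young diagrams (Y¹,Y²) with |Y¹| + |Y²| = N and Y² having at most m columns. -/
/-!
Record a Young diagram by the multiset of its row lengths (Mathlib's rows are the paper's
columns: `colLen 0` counts rows). A removable box ends a row whose successor is strictly shorter,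
so a set of `m` removable boxes of `Y` is the same as a set `T` of `m` distinct row lengths of `Y`.
Deleting the rows `T` from `Y` leaves `Y¹`, and subtracting the staircase `(m, m - 1, …, 1)` from
the elements of `T` listed decreasingly leaves the row lengths of a diagram `Y²` with at most `m`
rows. Conversely `Y` is `Y¹` with the rows `Y².rowLen k + (m - k)`, `k < m`, added, so
`|Y| = |Y¹| + |Y²| + m(m+1)/2` and `l(Y) = l(Y¹) + m`, and the exponents agree.
-/

open scoped Classical

/-- The removable boxes of a Young diagram `Y`. -/
noncomputable def YoungDiagram.removables (Y : YoungDiagram) : Finset (ℕ × ℕ) :=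
  Y.cells.filter fun c => (c.1 + 1, c.2) ∉ Y ∧ (c.1, c.2 + 1) ∉ Y

open Finset

namespace Finset

section

variable {α β : Type*} [DecidableEq β] {f : α → β} {s : Finset α}

theorem filter_mem_image_eq {t : Finset α} (hf : Set.InjOn f s) (ht : t ⊆ s) :
    s.filter (fun x => f x ∈ t.image f) = t := by
  ext x
  simp only [mem_filter, mem_image]
  constructor
  · rintro ⟨hx, y, hy, hyx⟩
    rwa [← hf (ht hy) hx hyx]
  · exact fun hx => ⟨ht hx, x, hx, rfl⟩

theorem image_filter_mem_eq {t : Finset β} (ht : t ⊆ s.image f) :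
    (s.filter fun x => f x ∈ t).image f = t := by
  rw [← filter_image (p := (· ∈ t)), filter_mem_eq_inter, inter_eq_right.2 ht]

end

theorem sum_range_tsub_left (m : ℕ) : ∑ k ∈ range m, (m - k) = m * (m + 1) / 2 := by
  have h := sum_range_reflect (fun j => j) (m + 1)
  rw [sum_range_succ, Nat.add_sub_cancel, Nat.sub_self, add_zero, sum_range_id,
    Nat.add_sub_cancel, Nat.mul_comm] at h
  exact h

end Finset

namespace YoungDiagram

theorem rowLen_pos_iff {μ : YoungDiagram} {i : ℕ} : 0 < μ.rowLen i ↔ i < μ.colLen 0 := by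
  rw [← mem_iff_lt_rowLen, mem_iff_lt_colLen]

theorem rowLen_eq_zero_of_colLen_le {μ : YoungDiagram} {i : ℕ} (h : μ.colLen 0 ≤ i) :
    μ.rowLen i = 0 := by
  by_contra h0
  have := rowLen_pos_iff.1 (Nat.pos_of_ne_zero h0)
  omega

theorem eq_of_rowLen_eq {μ ν : YoungDiagram} (h : ∀ i, μ.rowLen i = ν.rowLen i) :
    μ = ν := by
  ext ⟨i, j⟩
  simp only [mem_cells, mem_iff_lt_rowLen, h]

theorem card_eq_sum_rowLen {μ : YoungDiagram} {m : ℕ} (h : μ.colLen 0 ≤ m) :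
    μ.card = ∑ i ∈ range m, μ.rowLen i := by
  rw [YoungDiagram.card, card_eq_sum_card_fiberwise (f := Prod.fst) (t := range m)]
  · refine sum_congr rfl fun i _ => ?_
    rw [rowLen_eq_card]
    rfl
  · intro c hc
    have : (c.1, 0) ∈ μ := μ.up_left_mem le_rfl (Nat.zero_le c.2) hc
    exact mem_range.2 ((mem_iff_lt_colLen.1 this).trans_le h)

theorem colLen_ofRowLens_le (w : List ℕ) (hw : w.SortedGE) :
    (ofRowLens w hw).colLen 0 ≤ w.length := by
  by_contra! h
  obtain ⟨hlt, -⟩ := mem_ofRowLens.1 (mem_iff_lt_colLen.2 h)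
  exact lt_irrefl _ hlt

def rowLensMultiset (μ : YoungDiagram) : Multiset ℕ := μ.rowLens

def ofRowLensMultiset (M : Multiset ℕ) : YoungDiagram :=
  ofRowLens (M.sort (· ≥ ·)) (Multiset.pairwise_sort _ _).sortedGE

theorem ofRowLensMultiset_rowLensMultiset (μ : YoungDiagram) :
    ofRowLensMultiset μ.rowLensMultiset = μ := by
  have h : μ.rowLensMultiset.sort (· ≥ ·) = μ.rowLens :=
    List.mergeSort_eq_self _ μ.rowLens_sorted.pairwise
  simp only [ofRowLensMultiset, h, ofRowLens_to_rowLens_eq_self]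

theorem rowLensMultiset_injective : Function.Injective rowLensMultiset :=
  Function.LeftInverse.injective ofRowLensMultiset_rowLensMultiset

theorem rowLensMultiset_ofRowLensMultiset {M : Multiset ℕ} (h : ∀ x ∈ M, 0 < x) :
    (ofRowLensMultiset M).rowLensMultiset = M := by
  rw [rowLensMultiset, ofRowLensMultiset, rowLens_ofRowLens_eq_self, Multiset.sort_eq]
  exact fun x hx => h x ((Multiset.mem_sort _).1 hx)

theorem card_rowLensMultiset (μ : YoungDiagram) :
    Multiset.card μ.rowLensMultiset = μ.colLen 0 :=
  μ.length_rowLens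

theorem sum_rowLensMultiset (μ : YoungDiagram) : μ.rowLensMultiset.sum = μ.card :=
  (card_eq_sum_rowLen le_rfl).symm

theorem mem_rowLensMultiset {μ : YoungDiagram} {v : ℕ} :
    v ∈ μ.rowLensMultiset ↔ 0 < v ∧ ∃ i, μ.rowLen i = v := by
  simp only [rowLensMultiset, rowLens, Multiset.mem_coe, List.mem_map, List.mem_range,
    ← rowLen_pos_iff]
  constructor
  · rintro ⟨i, hi, rfl⟩
    exact ⟨hi, i, rfl⟩
  · rintro ⟨hv, i, rfl⟩
    exact ⟨i, hv, rfl⟩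

theorem mem_removables {μ : YoungDiagram} {c : ℕ × ℕ} :
    c ∈ μ.removables ↔ μ.rowLen c.1 = c.2 + 1 ∧ μ.rowLen (c.1 + 1) ≤ c.2 := by
  obtain ⟨i, j⟩ := c
  simp only [removables, mem_filter, mem_cells, mem_iff_lt_rowLen, not_lt]
  omega

theorem removables_injOn (μ : YoungDiagram) :
    Set.InjOn (fun c : ℕ × ℕ => c.2 + 1) μ.removables := by
  rintro ⟨i, j⟩ hc ⟨i', j'⟩ hc' (hjj' : j + 1 = j' + 1)
  obtain ⟨hi, hi1⟩ := mem_removables.1 hc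
  obtain ⟨hi', hi'1⟩ := mem_removables.1 hc'
  simp only at hi hi1 hi' hi'1
  obtain hlt | rfl | hlt := lt_trichotomy i i'
  · have := μ.rowLen_anti (i + 1) i' hlt
    omega
  · simp only [Prod.mk.injEq, true_and]
    omega
  · have := μ.rowLen_anti (i' + 1) i hlt
    omega

/-- The witness is the end of the last row of length `v`. -/
theorem exists_mem_removables {μ : YoungDiagram} {v : ℕ} (hv : v ∈ μ.rowLensMultiset) :
    ∃ i, (i, v - 1) ∈ μ.removables := by
  obtain ⟨hpos, i₀, hi₀⟩ := mem_rowLensMultiset.1 hv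
  obtain ⟨k, hk, hmin⟩ : ∃ k, μ.rowLen k < v ∧ ∀ j < k, v ≤ μ.rowLen j :=
    have hshort : ∃ k, μ.rowLen k < v :=
      ⟨μ.colLen 0, by rwa [rowLen_eq_zero_of_colLen_le le_rfl]⟩
    ⟨Nat.find hshort, Nat.find_spec hshort, fun j hj => not_lt.1 (Nat.find_min hshort hj)⟩
  have hi₀k : i₀ < k := by
    by_contra! hle
    have := μ.rowLen_anti k i₀ hle
    omega
  have := hmin (k - 1) (by omega)
  have := μ.rowLen_anti i₀ (k - 1) (by omega)
  refine ⟨k - 1, mem_removables.2 ⟨?_, ?_⟩⟩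
  · show μ.rowLen (k - 1) = v - 1 + 1
    omega
  · show μ.rowLen (k - 1 + 1) ≤ v - 1
    rw [Nat.sub_add_cancel (by omega)]
    omega

theorem image_removables (μ : YoungDiagram) :
    μ.removables.image (fun c => c.2 + 1) = μ.rowLensMultiset.toFinset := by
  ext v
  simp only [mem_image, Multiset.mem_toFinset]
  constructor
  · rintro ⟨c, hc, rfl⟩
    exact mem_rowLensMultiset.2 ⟨by omega, c.1, (mem_removables.1 hc).1⟩
  · intro hv
    obtain ⟨i, hi⟩ := exists_mem_removables hv
    exact ⟨_, hi, Nat.sub_add_cancel (mem_rowLensMultiset.1 hv).1⟩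

def shiftedRowLen (m : ℕ) (μ : YoungDiagram) (k : Fin m) : ℕ := μ.rowLen k + (m - k)

theorem strictAnti_shiftedRowLen (m : ℕ) (μ : YoungDiagram) :
    StrictAnti (shiftedRowLen m μ) := by
  intro a b (hab : (a : ℕ) < b)
  have := μ.rowLen_anti a b hab.le
  have := b.2
  simp only [shiftedRowLen]
  omega

theorem exists_shiftedRowLen_eq {m : ℕ} {g : Fin m → ℕ} (hg : StrictAnti g)
    (hpos : ∀ k, 0 < g k) :
    ∃ μ : YoungDiagram, μ.colLen 0 ≤ m ∧ shiftedRowLen m μ = g := by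
  have hanti {a b : Fin m} (hab : a ≤ b) : g b + b ≤ g a + a := by
    revert a b
    change Antitone fun k : Fin m => g k + k
    cases m with
    | zero => exact fun a => a.elim0
    | succ n =>
      refine Fin.antitone_iff_succ_le.2 fun i => ?_
      have := hg (Fin.castSucc_lt_succ (i := i))
      simp only [Fin.val_succ, Fin.val_castSucc]
      omega
  have hge (k : Fin m) : m - k ≤ g k := by
    have hk := k.2
    have := hanti (a := k) (b := ⟨m - 1, by omega⟩) (Fin.le_def.2 (by simp only; omega))
    have := hpos ⟨m - 1, by omega⟩
    dsimp only at *
    omega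
  have hw : (List.ofFn fun k : Fin m => g k - (m - k)).SortedGE := by
    refine List.sortedGE_ofFn_iff.2 fun a b hab => ?_
    have := hanti hab
    have := a.2
    have := b.2
    omega
  refine ⟨ofRowLens _ hw, by simpa using colLen_ofRowLens_le _ hw, funext fun k => ?_⟩
  have := rowLen_ofRowLens (hw := hw) ⟨k, by simp⟩
  simp only [Fin.getElem_fin, List.getElem_ofFn, Fin.eta] at this
  simp only [shiftedRowLen, this]
  have := hge k
  omega

def shiftedRowLens (m : ℕ) (μ : YoungDiagram) : Finset ℕ := univ.image (shiftedRowLen m μ)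

theorem card_shiftedRowLens (m : ℕ) (μ : YoungDiagram) : #(shiftedRowLens m μ) = m := by
  rw [shiftedRowLens, card_image_of_injective _ (strictAnti_shiftedRowLen m μ).injective,
    card_univ, Fintype.card_fin]

theorem pos_of_mem_shiftedRowLens {m : ℕ} {μ : YoungDiagram} {v : ℕ}
    (hv : v ∈ shiftedRowLens m μ) : 0 < v := by
  obtain ⟨k, -, rfl⟩ := mem_image.1 hv
  have := k.2
  simp only [shiftedRowLen]
  omega

theorem sum_shiftedRowLens {m : ℕ} {μ : YoungDiagram} (h : μ.colLen 0 ≤ m) :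
    (shiftedRowLens m μ).val.sum = μ.card + m * (m + 1) / 2 := by
  rw [sum_val, shiftedRowLens,
    sum_image fun a _ b _ hab => (strictAnti_shiftedRowLen m μ).injective hab]
  simp only [id, shiftedRowLen, sum_add_distrib]
  rw [Fin.sum_univ_eq_sum_range μ.rowLen, Fin.sum_univ_eq_sum_range (m - ·),
    ← card_eq_sum_rowLen h, sum_range_tsub_left]

theorem shiftedRowLens_injOn (m : ℕ) :
    Set.InjOn (shiftedRowLens m) {μ | μ.colLen 0 ≤ m} := by
  intro μ (hμ : μ.colLen 0 ≤ m) ν (hν : ν.colLen 0 ≤ m) h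
  have hrange := congrArg (fun s : Finset ℕ => (s : Set ℕ)) h
  simp only [shiftedRowLens, coe_image, coe_univ, Set.image_univ] at hrange
  have hfun := ((strictAnti_shiftedRowLen m μ).range_inj (strictAnti_shiftedRowLen m ν)).1 hrange
  refine eq_of_rowLen_eq fun i => ?_
  rcases lt_or_ge i m with hi | hi
  · have := congrFun hfun ⟨i, hi⟩
    simp only [shiftedRowLen] at this
    omega
  · rw [rowLen_eq_zero_of_colLen_le (hμ.trans hi), rowLen_eq_zero_of_colLen_le (hν.trans hi)]

theorem exists_shiftedRowLens_eq {m : ℕ} {T : Finset ℕ} (hT : #T = m)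
    (hpos : ∀ v ∈ T, 0 < v) :
    ∃ μ : YoungDiagram, μ.colLen 0 ≤ m ∧ shiftedRowLens m μ = T := by
  have hg : StrictAnti (T.orderEmbOfFin hT ∘ Fin.rev) :=
    (T.orderEmbOfFin hT).strictMono.comp_strictAnti Fin.rev_strictAnti
  obtain ⟨μ, hμ, hshift⟩ :=
    exists_shiftedRowLen_eq hg fun k => hpos _ (T.orderEmbOfFin_mem hT _)
  refine ⟨μ, hμ, ?_⟩
  rw [shiftedRowLens, hshift, ← coe_inj, coe_image, coe_univ, Set.image_univ,
    Fin.rev_surjective.range_comp, range_orderEmbOfFin]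

noncomputable def removablesOfRowLens (μ : YoungDiagram) (T : Finset ℕ) : Finset (ℕ × ℕ) :=
  μ.removables.filter fun c => c.2 + 1 ∈ T

theorem image_removablesOfRowLens {μ : YoungDiagram} {T : Finset ℕ}
    (hT : T ⊆ μ.rowLensMultiset.toFinset) :
    (μ.removablesOfRowLens T).image (fun c => c.2 + 1) = T :=
  image_filter_mem_eq (by rwa [image_removables])

theorem removablesOfRowLens_image {μ : YoungDiagram} {S : Finset (ℕ × ℕ)}
    (hS : S ⊆ μ.removables) : μ.removablesOfRowLens (S.image fun c => c.2 + 1) = S :=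
  filter_mem_image_eq μ.removables_injOn hS

theorem card_removablesOfRowLens {μ : YoungDiagram} {T : Finset ℕ}
    (hT : T ⊆ μ.rowLensMultiset.toFinset) : #(μ.removablesOfRowLens T) = #T := by
  conv_rhs => rw [← image_removablesOfRowLens hT]
  exact (card_image_of_injOn (μ.removables_injOn.mono (coe_subset.2 (filter_subset _ _)))).symm

def addShiftedRows (m : ℕ) (Y₁ Y₂ : YoungDiagram) : YoungDiagram :=
  ofRowLensMultiset (Y₁.rowLensMultiset + (shiftedRowLens m Y₂).val)

theorem rowLensMultiset_addShiftedRows (m : ℕ) (Y₁ Y₂ : YoungDiagram) :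
    (addShiftedRows m Y₁ Y₂).rowLensMultiset =
      Y₁.rowLensMultiset + (shiftedRowLens m Y₂).val :=
  rowLensMultiset_ofRowLensMultiset fun _ hx =>
    (Multiset.mem_add.1 hx).elim (fun h => (mem_rowLensMultiset.1 h).1) pos_of_mem_shiftedRowLens

theorem shiftedRowLens_subset_addShiftedRows (m : ℕ) (Y₁ Y₂ : YoungDiagram) :
    shiftedRowLens m Y₂ ⊆ (addShiftedRows m Y₁ Y₂).rowLensMultiset.toFinset := by
  intro _ hv
  rw [Multiset.mem_toFinset, rowLensMultiset_addShiftedRows]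
  exact Multiset.mem_add.2 (Or.inr hv)

theorem card_addShiftedRows {m : ℕ} (Y₁ : YoungDiagram) {Y₂ : YoungDiagram}
    (h : Y₂.colLen 0 ≤ m) :
    (addShiftedRows m Y₁ Y₂).card = Y₁.card + Y₂.card + m * (m + 1) / 2 := by
  rw [← sum_rowLensMultiset, rowLensMultiset_addShiftedRows, Multiset.sum_add,
    sum_shiftedRowLens h, sum_rowLensMultiset, add_assoc]

theorem colLen_addShiftedRows (m : ℕ) (Y₁ Y₂ : YoungDiagram) :
    (addShiftedRows m Y₁ Y₂).colLen 0 = Y₁.colLen 0 + m := by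
  rw [← card_rowLensMultiset, rowLensMultiset_addShiftedRows, Multiset.card_add,
    card_rowLensMultiset, card_val, card_shiftedRowLens]

end YoungDiagram

open YoungDiagram

abbrev MarkedDiagram (m N : ℕ) : Type :=
  {p : YoungDiagram × Finset (ℕ × ℕ) //
    p.2 ⊆ p.1.removables ∧ p.2.card = m ∧ p.1.card = N + m * (m + 1) / 2}

abbrev DiagramPair (m N : ℕ) : Type :=
  {p : YoungDiagram × YoungDiagram // p.2.colLen 0 ≤ m ∧ p.1.card + p.2.card = N}

noncomputable def markedOfPair (m N : ℕ) (b : DiagramPair m N) : MarkedDiagram m N :=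
  ⟨(addShiftedRows m b.1.1 b.1.2,
      (addShiftedRows m b.1.1 b.1.2).removablesOfRowLens (shiftedRowLens m b.1.2)),
    filter_subset _ _,
    by rw [card_removablesOfRowLens (shiftedRowLens_subset_addShiftedRows _ _ _),
      card_shiftedRowLens],
    by rw [card_addShiftedRows _ b.2.1, b.2.2]⟩

theorem markedOfPair_injective (m N : ℕ) : Function.Injective (markedOfPair m N) := by
  rintro ⟨⟨Y₁, Y₂⟩, hY₂, _⟩ ⟨⟨Y₁', Y₂'⟩, hY₂', _⟩ h
  simp only [markedOfPair, Subtype.mk.injEq, Prod.mk.injEq] at h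
  obtain ⟨hY, hS⟩ := h
  have hT : shiftedRowLens m Y₂ = shiftedRowLens m Y₂' := by
    rw [← image_removablesOfRowLens (shiftedRowLens_subset_addShiftedRows m Y₁ Y₂), hS,
      image_removablesOfRowLens (shiftedRowLens_subset_addShiftedRows m Y₁' Y₂')]
  obtain rfl := shiftedRowLens_injOn m hY₂ hY₂' hT
  have hrows := congrArg rowLensMultiset hY
  rw [rowLensMultiset_addShiftedRows, rowLensMultiset_addShiftedRows] at hrows
  obtain rfl := rowLensMultiset_injective (add_right_cancel hrows)
  rfl

theorem markedOfPair_surjective (m N : ℕ) : Function.Surjective (markedOfPair m N) := by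
  rintro ⟨⟨Y, S⟩, hS, hScard, hYcard⟩
  dsimp only at hS hScard hYcard
  set T := S.image fun c => c.2 + 1
  have hTY : T ⊆ Y.rowLensMultiset.toFinset := image_removables Y ▸ image_subset_image hS
  have hTle : T.val ≤ Y.rowLensMultiset :=
    (Multiset.le_iff_subset T.nodup).2 fun v hv => Multiset.mem_toFinset.1 (hTY hv)
  have hTcard : #T = m := by
    rw [card_image_of_injOn (Y.removables_injOn.mono (coe_subset.2 hS)), hScard]
  obtain ⟨Y₂, hY₂, hY₂T⟩ := exists_shiftedRowLens_eq hTcard fun v hv =>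
    (mem_rowLensMultiset.1 (Multiset.mem_toFinset.1 (hTY hv))).1
  set Y₁ := ofRowLensMultiset (Y.rowLensMultiset - T.val)
  have hY₁ : Y₁.rowLensMultiset = Y.rowLensMultiset - T.val :=
    rowLensMultiset_ofRowLensMultiset fun _ hx =>
      (mem_rowLensMultiset.1 (Multiset.mem_of_le tsub_le_self hx)).1
  have hY : addShiftedRows m Y₁ Y₂ = Y := by
    rw [addShiftedRows, hY₂T, hY₁, tsub_add_cancel_of_le hTle,
      ofRowLensMultiset_rowLensMultiset]
  have hcard : Y₁.card + Y₂.card = N := by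
    have := card_addShiftedRows Y₁ hY₂
    rw [hY] at this
    omega
  refine ⟨⟨(Y₁, Y₂), hY₂, hcard⟩, Subtype.ext ?_⟩
  simp only [markedOfPair, hY, hY₂T]
  exact Prod.ext rfl (removablesOfRowLens_image hS)

/-- For every `m, N ≥ 0`, the sum of `t^{2(|Y| + m − m(m+1)/2 − l(Y))}` over all pairs
`(Y,S)` with `S` a set of `m` removable boxes of `Y` and `|Y| = N + m(m+1)/2` equals
the sum of `t^{2(|Y¹| + |Y²| − l(Y¹))}` over all pairs of Young diagrams `(Y¹,Y²)`
with `|Y¹| + |Y²| = N` and `Y²` having at most `m` columns.  Here `l(·)` is the number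
of columns. -/
theorem sum_marked_eq_sum_pairs (m N : ℕ) :
    (∑ᶠ a : {p : YoungDiagram × Finset (ℕ × ℕ) //
          p.2 ⊆ p.1.removables ∧ p.2.card = m ∧ p.1.card = N + m * (m + 1) / 2},
        (Polynomial.X : Polynomial ℤ) ^
          (2 * (a.val.1.card + m - m * (m + 1) / 2 - a.val.1.colLen 0))) =
      ∑ᶠ b : {p : YoungDiagram × YoungDiagram //
          p.2.colLen 0 ≤ m ∧ p.1.card + p.2.card = N},
        (Polynomial.X : Polynomial ℤ) ^
          (2 * (b.val.1.card + b.val.2.card - b.val.1.colLen 0)) := by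
  refine (finsum_eq_of_bijective (markedOfPair m N)
    ⟨markedOfPair_injective m N, markedOfPair_surjective m N⟩
    fun ⟨⟨Y₁, Y₂⟩, hY₂, _⟩ => ?_).symm
  dsimp only at hY₂
  have hcard := card_addShiftedRows Y₁ hY₂
  have hcol := colLen_addShiftedRows m Y₁ Y₂
  simp only [markedOfPair]
  congr 2
  omega
end

section
/- As an identity of formal power series: the sum over all pairs of partitions (Y¹,Y²) of t^{2(|Y¹|−l(Y¹))} t^{2|Y²|} q^{|Y¹|+|Y²|} equals (∏_{d=1}^{∞} 1/(1 − t^{2d−2} q^{d})) · (∏_{d=1}^{∞} 1/(1 − t^{2d} q^{d})) in ℤ[t][[q]]. -/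
/-!
Expanding each factor `1/(1 - c_d q^d)` as a geometric series in `q^d`, the coefficient of `q^n`
in `∏_{d ≤ N} 1/(1 - c_d q^d)` (for `n ≤ N`) is `∑_{Y ⊢ n} ∏_{p ∈ Y} c_p`: a partition with
`m_d` parts equal to `d` picks the term `(c_d q^d)^{m_d}` of the `d`-th factor.
For `c_d = t^{2d}` every partition of `n` contributes `t^{2n}`; for `c_d = t^{2d-2}` it
contributes `t^{2(n - #parts)}`, and conjugation of partitions exchanges the number of parts with
the largest part. The coefficient of `q^N` of the product is the convolution of the two.
-/

open scoped Classical

/-- The inverse power series `1/(1 - t^a q^d)` in `ℤ[t][[q]]`. -/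
noncomputable def invFac (a d : ℕ) : PowerSeries (Polynomial ℤ) :=
  PowerSeries.invOfUnit
    (1 - PowerSeries.C (R := Polynomial ℤ) (Polynomial.X ^ a) * PowerSeries.X ^ d) 1

open PowerSeries Finset

theorem Finset.lt_card_filter_range_iff {P : ℕ → Prop} [DecidablePred P]
    (hP : ∀ ⦃a b⦄, a ≤ b → P b → P a) {M j : ℕ} :
    j < #((range M).filter P) ↔ j < M ∧ P j := by
  constructor
  · intro hj
    by_contra hjP
    have hsub : (range M).filter P ⊆ range j := fun k hk => by
      rw [mem_filter, mem_range] at hk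
      exact mem_range.2 (lt_of_not_ge fun hjk => hjP ⟨hjk.trans_lt hk.1, hP hjk hk.2⟩)
    have := card_le_card hsub
    rw [card_range] at this
    omega
  · rintro ⟨hjM, hPj⟩
    have hsub : range (j + 1) ⊆ (range M).filter P := fun k hk => by
      rw [mem_range] at hk
      exact mem_filter.2 ⟨mem_range.2 (by omega), hP (by omega) hPj⟩
    simpa using card_le_card hsub

theorem Multiset.prod_map_pow_eq_pow_sum {M : Type*} [CommMonoid M] (a : M) (e : ℕ → ℕ)
    (s : Multiset ℕ) : (s.map fun d => a ^ e d).prod = a ^ (s.map e).sum := by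
  induction s using Multiset.induction with
  | empty => simp
  | cons b s ih => simp [ih, pow_add]

theorem Multiset.sum_map_sub_one_add_card {s : Multiset ℕ} (hs : ∀ p ∈ s, 0 < p) :
    (s.map (· - 1)).sum + card s = s.sum := by
  induction s using Multiset.induction with
  | empty => simp
  | cons a s ih =>
    have ha := hs a (mem_cons_self a s)
    have ih := ih fun p hp => hs p (mem_cons_of_mem hp)
    simp only [map_cons, sum_cons, card_cons]
    omega

namespace PowerSeries

variable {R : Type*} [CommRing R]

theorem coeff_invOfUnit_one_sub_C_mul_X_pow (r : R) {d : ℕ} (hd : d ≠ 0) (m : ℕ) :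
    coeff m (invOfUnit (1 - C r * X ^ d) 1) = if d ∣ m then r ^ (m / d) else 0 := by
  set u : R⟦X⟧ := 1 - C r * X ^ d
  set S := expand d hd (rescale r (mk 1))
  have hS : u * S = 1 := by
    have hu : u = expand d hd (rescale r (1 - X)) := by
      simp [u, rescale_X, expand_C]
    rw [hu, ← map_mul, ← map_mul, mul_comm, mk_one_mul_one_sub_eq_one, map_one, map_one]
  have hI : invOfUnit u 1 * u = 1 := invOfUnit_mul u 1 (by simp [u, zero_pow hd])
  rw [left_inv_eq_right_inv hI hS, coeff_expand]
  simp [coeff_rescale]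

end PowerSeries

namespace Nat.Partition

theorem exists_toFinsuppAntidiag_eq {s : Finset ℕ} (hs : 0 ∉ s) {n : ℕ} {g : ℕ →₀ ℕ}
    (hg : g ∈ s.finsuppAntidiag n) (hdvd : ∀ d ∈ s, d ∣ g d) :
    ∃ Y : n.Partition, Y.toFinsuppAntidiag = g := by
  obtain ⟨hsum, hsupp⟩ := mem_finsuppAntidiag.1 hg
  have hzero : ∀ e ∉ s, g e = 0 := fun e he => Finsupp.notMem_support_iff.1 (mt (@hsupp e) he)
  refine ⟨⟨∑ d ∈ s, Multiset.replicate (g d / d) d, fun {e} he => ?_, ?_⟩, ?_⟩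
  · obtain ⟨d, hd, he⟩ := Multiset.mem_sum.1 he
    rw [Multiset.eq_of_mem_replicate he]
    exact Nat.pos_of_ne_zero (ne_of_mem_of_not_mem hd hs)
  · rw [Multiset.sum_sum, ← hsum]
    refine sum_congr rfl fun d hd => ?_
    rw [Multiset.sum_replicate, smul_eq_mul, Nat.div_mul_cancel (hdvd d hd)]
  · ext e
    show Multiset.count e _ * e = g e
    rw [Multiset.count_sum']
    simp only [Multiset.count_replicate, sum_ite_eq']
    split_ifs with he
    · exact Nat.div_mul_cancel (hdvd e he)
    · rw [hzero e he, zero_mul]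

theorem prod_map_parts_eq_prod_Icc {M : Type*} [CommMonoid M] (c : ℕ → M) {n N : ℕ}
    (hn : n ≤ N) (Y : n.Partition) :
    (Y.parts.map c).prod = ∏ d ∈ Icc 1 N, c d ^ Y.parts.count d := by
  rw [prod_multiset_map_count]
  refine prod_subset (fun d hd => ?_) fun d _ hd => ?_
  · rw [Multiset.mem_toFinset] at hd
    exact mem_Icc.2 ⟨Y.parts_pos hd, (Y.le_of_mem_parts hd).trans hn⟩
  · rw [Multiset.count_eq_zero_of_notMem (by simpa using hd), pow_zero]

variable {R : Type*} [CommRing R]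

theorem coeff_prod_invOfUnit (c : ℕ → R) {n N : ℕ} (hn : n ≤ N) :
    coeff n (∏ d ∈ Icc 1 N, invOfUnit (1 - C (c d) * X ^ d) 1) =
      ∑ Y : n.Partition, (Y.parts.map c).prod := by
  have hIcc : 0 ∉ Icc 1 N := by simp
  rw [coeff_prod]
  refine (sum_of_injOn toFinsuppAntidiag (toFinsuppAntidiag_injective n).injOn
    (fun Y _ => finsuppAntidiag_mono (Icc_subset_Icc_right hn) _
      Y.toFinsuppAntidiag_mem_finsuppAntidiag) (fun g hg hgY => ?_) fun Y _ => ?_).symm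
  · by_contra hne
    have hdvd : ∀ d ∈ Icc 1 N, d ∣ g d := fun d hd => by
      by_contra h
      exact hne (prod_eq_zero hd (by
        rw [coeff_invOfUnit_one_sub_C_mul_X_pow _ (ne_of_mem_of_not_mem hd hIcc), if_neg h]))
    obtain ⟨Y, rfl⟩ := exists_toFinsuppAntidiag_eq hIcc hg hdvd
    exact hgY ⟨Y, mem_coe.2 (mem_univ Y), rfl⟩
  · rw [prod_map_parts_eq_prod_Icc c hn]
    refine prod_congr rfl fun d hd => ?_
    have hd0 : d ≠ 0 := ne_of_mem_of_not_mem hd hIcc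
    have hY : Y.toFinsuppAntidiag d = Y.parts.count d * d := rfl
    rw [coeff_invOfUnit_one_sub_C_mul_X_pow _ hd0, hY, if_pos (dvd_mul_left d _),
      Nat.mul_div_cancel _ (Nat.pos_of_ne_zero hd0)]

end Nat.Partition

namespace Multiset

-- The length of column `j` of the Young diagram whose rows are the parts of `s`.
def colLen (s : Multiset ℕ) (j : ℕ) : ℕ := card (s.filter (j < ·))

def conj (s : Multiset ℕ) : Multiset ℕ := (range s.sup).map s.colLen

variable {s : Multiset ℕ}

theorem colLen_antitone (s : Multiset ℕ) : Antitone s.colLen := fun _ _ hjk =>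
  card_le_card (monotone_filter_right s fun _ hp => hjk.trans_lt hp)

theorem colLen_le_card (s : Multiset ℕ) (j : ℕ) : s.colLen j ≤ card s :=
  card_le_card (filter_le _ s)

theorem colLen_pos_iff {j : ℕ} : 0 < s.colLen j ↔ j < s.sup := by
  rw [colLen, card_pos_iff_exists_mem]
  simp only [mem_filter]
  constructor
  · rintro ⟨p, hp, hjp⟩
    exact hjp.trans_le (le_sup hp)
  · intro hj
    by_contra! h
    exact (sup_le.2 fun p hp => h p hp).not_gt hj

theorem colLen_cons (a : ℕ) (s : Multiset ℕ) (j : ℕ) :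
    (a ::ₘ s).colLen j = s.colLen j + if j < a then 1 else 0 := by
  unfold colLen
  rw [filter_cons]
  split_ifs <;> simp

theorem colLen_eq_colLen_succ_add_count (s : Multiset ℕ) (j : ℕ) :
    s.colLen j = s.colLen (j + 1) + s.count (j + 1) := by
  induction s using Multiset.induction with
  | empty => simp [colLen]
  | cons a s ih =>
    rw [colLen_cons, colLen_cons, count_cons, ih]
    split_ifs <;> omega

theorem eq_of_colLen_eq {t : Multiset ℕ} (hs : ∀ p ∈ s, 0 < p) (ht : ∀ p ∈ t, 0 < p)
    (h : s.colLen = t.colLen) : s = t := by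
  ext (_ | j)
  · rw [count_eq_zero_of_notMem fun h0 => (hs 0 h0).false,
      count_eq_zero_of_notMem fun h0 => (ht 0 h0).false]
  · have hs := s.colLen_eq_colLen_succ_add_count j
    have ht := t.colLen_eq_colLen_succ_add_count j
    rw [h] at hs
    omega

theorem pos_of_mem_conj {p : ℕ} (hp : p ∈ s.conj) : 0 < p := by
  obtain ⟨j, hj, rfl⟩ := mem_map.1 hp
  exact colLen_pos_iff.2 (mem_range.1 hj)

-- Both sides say that the box `(i, j)` lies in the Young diagram of `s`.
theorem lt_colLen_conj_iff {i j : ℕ} : j < s.conj.colLen i ↔ i < s.colLen j := by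
  have : s.conj.colLen i = #((Finset.range s.sup).filter fun j => i < s.colLen j) := by
    rw [colLen, conj, filter_map, card_map]
    rfl
  rw [this, Finset.lt_card_filter_range_iff fun a b hab h => h.trans_le (s.colLen_antitone hab)]
  exact and_iff_right_of_imp fun h => colLen_pos_iff.1 (i.zero_le.trans_lt h)

theorem conj_conj (hs : ∀ p ∈ s, 0 < p) : s.conj.conj = s := by
  refine eq_of_colLen_eq (fun _ => pos_of_mem_conj) hs
    (funext fun j => eq_of_forall_lt_iff fun i => ?_)
  rw [lt_colLen_conj_iff, lt_colLen_conj_iff]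

theorem sum_range_colLen {M : ℕ} (hM : ∀ p ∈ s, p ≤ M) :
    ∑ j ∈ Finset.range M, s.colLen j = s.sum := by
  induction s using Multiset.induction with
  | empty => simp [colLen]
  | cons a s ih =>
    simp only [colLen_cons, Finset.sum_add_distrib, sum_cons, Finset.sum_boole]
    have haM := hM a (mem_cons_self a s)
    have hfilter : (Finset.range M).filter (· < a) = Finset.range a := by
      ext k
      simp only [Finset.mem_filter, Finset.mem_range]
      omega
    rw [ih fun p hp => hM p (mem_cons_of_mem hp), hfilter, Finset.card_range, Nat.cast_id,
      add_comm]

theorem sum_conj (s : Multiset ℕ) : s.conj.sum = s.sum := by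
  rw [conj, ← Finset.range_val, ← Finset.sum_eq_multiset_sum]
  exact sum_range_colLen fun p => le_sup

theorem sup_conj (hs : ∀ p ∈ s, 0 < p) : s.conj.sup = card s := by
  refine le_antisymm (sup_le.2 fun p hp => ?_) ?_
  · obtain ⟨j, -, rfl⟩ := mem_map.1 hp
    exact s.colLen_le_card j
  · rcases eq_or_ne s 0 with rfl | hne
    · simp
    have h0 : s.colLen 0 = card s := congrArg card (filter_eq_self.2 hs)
    obtain ⟨p, hp⟩ := exists_mem_of_ne_zero hne
    exact h0 ▸ le_sup (mem_map_of_mem _ (mem_range.2 ((hs p hp).trans_le (le_sup hp))))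

end Multiset


namespace Nat.Partition

def conj {n : ℕ} (Y : n.Partition) : n.Partition where
  parts := Y.parts.conj
  parts_pos := Multiset.pos_of_mem_conj
  parts_sum := Y.parts.sum_conj.trans Y.parts_sum

theorem conj_conj {n : ℕ} (Y : n.Partition) : Y.conj.conj = Y :=
  Nat.Partition.ext (Multiset.conj_conj fun _ => Y.parts_pos)

theorem sup_conj_parts {n : ℕ} (Y : n.Partition) : Y.conj.parts.sup = Multiset.card Y.parts :=
  Multiset.sup_conj fun _ => Y.parts_pos

theorem sum_comp_card_parts_eq_sum_comp_sup_parts {M : Type*} [AddCommMonoid M] (f : ℕ → M)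
    (n : ℕ) :
    ∑ Y : n.Partition, f (Multiset.card Y.parts) = ∑ Y : n.Partition, f Y.parts.sup :=
  Fintype.sum_bijective conj (Function.Involutive.bijective conj_conj) _ _ fun Y => by
    rw [sup_conj_parts]

end Nat.Partition

theorem coeff_prod_invFac (e : ℕ → ℕ) {n N : ℕ} (hn : n ≤ N) :
    coeff n (∏ d ∈ Icc 1 N, invFac (e d) d) =
      ∑ Y : n.Partition, (Polynomial.X : Polynomial ℤ) ^ (Y.parts.map e).sum := by
  simp only [← Multiset.prod_map_pow_eq_pow_sum]
  exact Nat.Partition.coeff_prod_invOfUnit (fun d => Polynomial.X ^ e d) hn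

theorem coeff_prod_invFac_two_mul {n N : ℕ} (hn : n ≤ N) :
    coeff n (∏ d ∈ Icc 1 N, invFac (2 * d) d) =
      ∑ _Y : n.Partition, (Polynomial.X : Polynomial ℤ) ^ (2 * n) := by
  rw [coeff_prod_invFac _ hn]
  refine sum_congr rfl fun Y _ => ?_
  rw [Multiset.sum_map_mul_left, Multiset.map_id', Y.parts_sum]

theorem coeff_prod_invFac_two_mul_sub_two {n N : ℕ} (hn : n ≤ N) :
    coeff n (∏ d ∈ Icc 1 N, invFac (2 * d - 2) d) =
      ∑ Y : n.Partition, (Polynomial.X : Polynomial ℤ) ^ (2 * (n - Y.parts.sup)) := by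
  rw [coeff_prod_invFac _ hn, ← Nat.Partition.sum_comp_card_parts_eq_sum_comp_sup_parts
    (fun k => Polynomial.X ^ (2 * (n - k)))]
  refine sum_congr rfl fun Y _ => ?_
  have h := Multiset.sum_map_sub_one_add_card fun _ => Y.parts_pos
  rw [Y.parts_sum] at h
  rw [show (fun d => 2 * d - 2) = fun d => 2 * (d - 1) by ext; omega, Multiset.sum_map_mul_left]
  congr 2
  omega

/-- Göttsche's formula for the blow-up, combinatorial form (stated coefficientwise;
the factors with `d > N` do not affect the coefficient of `q^N`): the sum over all
pairs of partitions `(Y¹,Y²)` of `t^{2(|Y¹|−l(Y¹))} t^{2|Y²|} q^{|Y¹|+|Y²|}` equals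
`(∏_{d=1}^{∞} 1/(1 − t^{2d−2} q^{d})) · (∏_{d=1}^{∞} 1/(1 − t^{2d} q^{d}))`. -/
theorem goettsche_blowup (N : ℕ) :
    (∑ i ∈ Finset.range (N + 1), ∑ Y1 : Nat.Partition i, ∑ _Y2 : Nat.Partition (N - i),
        (Polynomial.X : Polynomial ℤ) ^ (2 * (i - Y1.parts.sup)) *
          (Polynomial.X : Polynomial ℤ) ^ (2 * (N - i))) =
      PowerSeries.coeff (R := Polynomial ℤ) N
        ((∏ d ∈ Finset.Icc 1 N, invFac (2 * d - 2) d) *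
          ∏ d ∈ Finset.Icc 1 N, invFac (2 * d) d) := by
  rw [coeff_mul, Nat.sum_antidiagonal_eq_sum_range_succ_mk]
  refine sum_congr rfl fun i hi => ?_
  have hiN : i ≤ N := Nat.lt_succ_iff.1 (mem_range.1 hi)
  rw [coeff_prod_invFac_two_mul_sub_two hiN, coeff_prod_invFac_two_mul (N.sub_le i),
    sum_mul_sum]
end

section
/- Fix N ≥ 0 and n ≥ 0. There is a bijection between: (i) pairs (I', I) of monomial ideals of ℂ[x,y] with I' ⊆ I, dim_ℂ ℂ[x,y]/I = N, dim_ℂ I/I' = n, and I/I' a trivial ℂ[x,y]-module (annihilated by x and y); and (ii) pairs (Y, S) where Y is a Young diagram with N + n boxes and S is a set of n removable boxes of Y. The bijection sends (I',I) to Y = Y(I') and S = {(a,b) : x^a y^b ∈ I \ I'}. -/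
open scoped Classical

/-- An ideal of `ℂ[x,y]` is a monomial ideal if it is generated by monomials. -/
def IsMonomialIdeal (J : Ideal (MvPolynomial (Fin 2) ℂ)) : Prop :=
  ∃ S : Set (Fin 2 →₀ ℕ),
    J = Ideal.span ((fun d => MvPolynomial.monomial d (1 : ℂ)) '' S)

/-!
A monomial ideal `J ⊆ ℂ[x,y]` is determined by its staircase `Y(J)`, the lower set of exponents
of the monomials outside `J`, and these monomials form a basis of `ℂ[x,y]/J`; so the colength of
`J` is the number of cells of `Y(J)`. For monomial ideals `I' ⊆ I`, the quotient `I/I'` is killed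
by `x` and `y` exactly when both upper neighbours of every cell of `Y(I') \ Y(I)` lie outside
`Y(I')`, i.e. when these cells are removable boxes of `Y(I')`. Conversely, deleting a set of
removable boxes from a Young diagram leaves a lower set, whose monomial ideal contains that of
the diagram with a trivial quotient.
-/

theorem Ideal.mul_mem_of_forall_mem_span {R : Type*} [CommSemiring R] {G : Set R}
    {I : Ideal R} {a f : R} (h : ∀ g ∈ G, a * g ∈ I) (hf : f ∈ Ideal.span G) :
    a * f ∈ I :=
  (Submodule.span_le (p := Submodule.comap (LinearMap.mulLeft R a) I)).2 h hf

namespace MvPolynomial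

variable {σ R : Type*}

section CommSemiring

variable [CommSemiring R]

noncomputable def monomialExponents (J : Ideal (MvPolynomial σ R)) : Set (σ →₀ ℕ) :=
  {d | monomial d 1 ∈ J}

theorem isUpperSet_monomialExponents (J : Ideal (MvPolynomial σ R)) :
    IsUpperSet (monomialExponents J) := by
  intro d d' hdd' hd
  have h : monomial d' (1 : R) = monomial (d' - d) 1 * monomial d 1 := by
    rw [monomial_mul, one_mul, tsub_add_cancel_of_le hdd']
  simpa only [monomialExponents, Set.mem_ofPred_eq, h] using J.mul_mem_left _ hd

theorem mem_span_monomial_iff_support_subset {U : Set (σ →₀ ℕ)} (hU : IsUpperSet U)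
    {p : MvPolynomial σ R} :
    p ∈ Ideal.span ((monomial · (1 : R)) '' U) ↔ ↑p.support ⊆ U := by
  rw [mem_ideal_span_monomial_image]
  exact ⟨fun h d hd ↦ (h d hd).elim fun _ ⟨hs, hsd⟩ ↦ hU hsd hs,
    fun h d hd ↦ ⟨d, h hd, le_rfl⟩⟩

theorem monomialExponents_span_monomial [Nontrivial R] {U : Set (σ →₀ ℕ)}
    (hU : IsUpperSet U) :
    monomialExponents (Ideal.span ((monomial · (1 : R)) '' U)) = U := by
  ext d
  simp [monomialExponents, mem_span_monomial_iff_support_subset hU, support_monomial]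

theorem span_monomial_monomialExponents (S : Set (σ →₀ ℕ)) :
    Ideal.span ((monomial · (1 : R)) ''
      monomialExponents (Ideal.span ((monomial · (1 : R)) '' S))) =
      Ideal.span ((monomial · (1 : R)) '' S) :=
  le_antisymm (Ideal.span_le.2 <| Set.image_subset_iff.2 fun _ hd ↦ hd)
    (Ideal.span_mono <| Set.image_mono fun _ hd ↦ Ideal.subset_span ⟨_, hd, rfl⟩)

theorem restrictScalars_span_monomial {U : Set (σ →₀ ℕ)} (hU : IsUpperSet U) :
    (Ideal.span ((monomial · (1 : R)) '' U)).restrictScalars R = restrictSupport R U :=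
  Submodule.ext fun _ ↦ mem_span_monomial_iff_support_subset hU

theorem isCompl_restrictSupport_compl (U : Set (σ →₀ ℕ)) :
    IsCompl (restrictSupport R U) (restrictSupport R Uᶜ) := by
  rw [restrictSupport, restrictSupport, AddMonoidAlgebra.supported_eq_map,
    AddMonoidAlgebra.supported_eq_map]
  exact (Submodule.orderIsoMapComap _).isCompl_iff.1
    ⟨Finsupp.disjoint_supported_supported isCompl_compl.disjoint,
      Finsupp.codisjoint_supported_supported isCompl_compl.codisjoint⟩

end CommSemiring

section CommRing

variable (R) [CommRing R] {U : Set (σ →₀ ℕ)}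

noncomputable def basisQuotientSpanMonomial (hU : IsUpperSet U) :
    Module.Basis (Uᶜ : Set (σ →₀ ℕ)) R
      (MvPolynomial σ R ⧸ Ideal.span ((monomial · (1 : R)) '' U)) :=
  (basisRestrictSupport R Uᶜ).map
    ((Submodule.Quotient.restrictScalarsEquiv R _).symm ≪≫ₗ
      Submodule.quotEquivOfEq _ _ (restrictScalars_span_monomial hU) ≪≫ₗ
      Submodule.quotientEquivOfIsCompl _ _ (isCompl_restrictSupport_compl U)).symm

variable {R}

theorem finrank_quotient_span_monomial [Nontrivial R] (hU : IsUpperSet U) :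
    Module.finrank R (MvPolynomial σ R ⧸ Ideal.span ((monomial · (1 : R)) '' U)) =
      Nat.card (Uᶜ : Set (σ →₀ ℕ)) :=
  Module.finrank_eq_nat_card_basis (basisQuotientSpanMonomial R hU)

theorem finite_quotient_span_monomial_iff [Nontrivial R] (hU : IsUpperSet U) :
    Module.Finite R (MvPolynomial σ R ⧸ Ideal.span ((monomial · (1 : R)) '' U)) ↔
      Uᶜ.Finite := by
  rw [← Set.finite_coe_iff]
  refine ⟨fun _ ↦ ?_, fun _ ↦ ?_⟩
  · exact Module.Finite.finite_basis (basisQuotientSpanMonomial R hU)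
  · exact Module.Finite.of_basis (basisQuotientSpanMonomial R hU)

end CommRing

section Bivariate

variable {R : Type*} [CommRing R] {T T' : Set (ℕ × ℕ)}

noncomputable def bidegree : ℕ × ℕ ≃o (Fin 2 →₀ ℕ) :=
  (OrderIso.finTwoArrowIso ℕ).symm.trans Finsupp.orderIsoFunOnFinite.symm

theorem monomial_bidegree (c : ℕ × ℕ) :
    monomial (bidegree c) (1 : R) = X 0 ^ c.1 * X 1 ^ c.2 := by
  have : bidegree c = Finsupp.single 0 c.1 + Finsupp.single 1 c.2 := by
    ext i
    fin_cases i <;> simp [bidegree] <;> rfl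
  rw [this, ← one_mul (1 : R), ← monomial_mul, ← X_pow_eq_monomial, ← X_pow_eq_monomial]

noncomputable def staircase (J : Ideal (MvPolynomial (Fin 2) R)) : Set (ℕ × ℕ) :=
  {c | X 0 ^ c.1 * X 1 ^ c.2 ∉ J}

noncomputable def idealOfStaircase (T : Set (ℕ × ℕ)) : Ideal (MvPolynomial (Fin 2) R) :=
  Ideal.span ((fun c ↦ X 0 ^ c.1 * X 1 ^ c.2) '' Tᶜ)

@[simp]
theorem mem_staircase {J : Ideal (MvPolynomial (Fin 2) R)} {c : ℕ × ℕ} :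
    c ∈ staircase J ↔ X 0 ^ c.1 * X 1 ^ c.2 ∉ J :=
  Iff.rfl

theorem staircase_eq_preimage (J : Ideal (MvPolynomial (Fin 2) R)) :
    staircase J = bidegree ⁻¹' (monomialExponents J)ᶜ := by
  ext c
  simp [staircase, monomialExponents, monomial_bidegree]

theorem idealOfStaircase_eq_span_monomial (T : Set (ℕ × ℕ)) :
    idealOfStaircase T = Ideal.span ((monomial · (1 : R)) '' (bidegree '' Tᶜ)) := by
  simp only [idealOfStaircase, Set.image_image, monomial_bidegree]

theorem isLowerSet_staircase (J : Ideal (MvPolynomial (Fin 2) R)) : IsLowerSet (staircase J) := by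
  rw [staircase_eq_preimage]
  exact (isUpperSet_monomialExponents J).compl.preimage bidegree.monotone

theorem staircase_idealOfStaircase [Nontrivial R] (hT : IsLowerSet T) :
    staircase (idealOfStaircase (R := R) T) = T := by
  rw [staircase_eq_preimage, idealOfStaircase_eq_span_monomial,
    monomialExponents_span_monomial (hT.compl.image bidegree),
    ← Set.image_compl_eq bidegree.bijective, compl_compl,
    bidegree.preimage_image]

theorem mem_idealOfStaircase_iff [Nontrivial R] (hT : IsLowerSet T) {c : ℕ × ℕ} :
    X 0 ^ c.1 * X 1 ^ c.2 ∈ idealOfStaircase (R := R) T ↔ c ∉ T := by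
  rw [← not_iff_not, not_not]
  exact Set.ext_iff.1 (staircase_idealOfStaircase hT) c

theorem idealOfStaircase_anti (h : T ⊆ T') :
    idealOfStaircase (R := R) T' ≤ idealOfStaircase T :=
  Ideal.span_mono <| Set.image_mono <| Set.compl_subset_compl.2 h

theorem finrank_quotient_idealOfStaircase {K : Type*} [Field K] (hT : IsLowerSet T) :
    Module.finrank K (MvPolynomial (Fin 2) K ⧸ idealOfStaircase T) = T.ncard := by
  rw [idealOfStaircase_eq_span_monomial, finrank_quotient_span_monomial (hT.compl.image bidegree),
    ← Set.image_compl_eq bidegree.bijective, compl_compl, Nat.card_coe_set_eq,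
    Set.ncard_image_of_injective _ bidegree.injective]

theorem finiteDimensional_quotient_idealOfStaircase_iff {K : Type*} [Field K] (hT : IsLowerSet T) :
    FiniteDimensional K (MvPolynomial (Fin 2) K ⧸ idealOfStaircase T) ↔ T.Finite := by
  rw [idealOfStaircase_eq_span_monomial]
  refine (finite_quotient_span_monomial_iff (hT.compl.image bidegree)).trans ?_
  rw [← Set.image_compl_eq bidegree.bijective, compl_compl,
    Set.finite_image_iff bidegree.injective.injOn]

theorem X_mul_mem_idealOfStaircase [Nontrivial R] (hT' : IsLowerSet T')
    (h : ∀ c ∉ T, (c.1 + 1, c.2) ∉ T' ∧ (c.1, c.2 + 1) ∉ T') :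
    (∀ f ∈ idealOfStaircase (R := R) T, X 0 * f ∈ idealOfStaircase T') ∧
      (∀ f ∈ idealOfStaircase (R := R) T, X 1 * f ∈ idealOfStaircase T') := by
  constructor <;> refine fun f hf ↦ Ideal.mul_mem_of_forall_mem_span ?_ hf <;>
    rintro _ ⟨c, hc, rfl⟩ <;> dsimp only
  · convert (mem_idealOfStaircase_iff (R := R) hT').2 (h c hc).1 using 1
    ring
  · convert (mem_idealOfStaircase_iff (R := R) hT').2 (h c hc).2 using 1
    ring

theorem succ_notMem_staircase {I I' : Ideal (MvPolynomial (Fin 2) R)}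
    (h0 : ∀ f ∈ I, X 0 * f ∈ I') (h1 : ∀ f ∈ I, X 1 * f ∈ I') {c : ℕ × ℕ}
    (hc : c ∉ staircase I) :
    (c.1 + 1, c.2) ∉ staircase I' ∧ (c.1, c.2 + 1) ∉ staircase I' := by
  simp only [mem_staircase, not_not] at hc ⊢
  constructor
  · convert h0 _ hc using 1
    ring
  · convert h1 _ hc using 1
    ring

end Bivariate

end MvPolynomial

open MvPolynomial

namespace IsMonomialIdeal

variable {J : Ideal (MvPolynomial (Fin 2) ℂ)}

theorem idealOfStaircase_staircase (hJ : IsMonomialIdeal J) :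
    idealOfStaircase (staircase J) = J := by
  obtain ⟨S, rfl⟩ := hJ
  rw [idealOfStaircase_eq_span_monomial, staircase_eq_preimage, ← Set.preimage_compl, compl_compl,
    bidegree.image_preimage, span_monomial_monomialExponents]

theorem finrank_quotient (hJ : IsMonomialIdeal J) :
    Module.finrank ℂ (MvPolynomial (Fin 2) ℂ ⧸ J) = (staircase J).ncard := by
  conv_lhs => rw [← hJ.idealOfStaircase_staircase]
  exact finrank_quotient_idealOfStaircase (isLowerSet_staircase J)

theorem finiteDimensional_quotient_iff (hJ : IsMonomialIdeal J) :
    FiniteDimensional ℂ (MvPolynomial (Fin 2) ℂ ⧸ J) ↔ (staircase J).Finite := by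
  conv_lhs => rw [← hJ.idealOfStaircase_staircase]
  exact finiteDimensional_quotient_idealOfStaircase_iff (isLowerSet_staircase J)

end IsMonomialIdeal

theorem isMonomialIdeal_idealOfStaircase (T : Set (ℕ × ℕ)) :
    IsMonomialIdeal (idealOfStaircase T) :=
  ⟨_, idealOfStaircase_eq_span_monomial T⟩

namespace YoungDiagram

noncomputable def ofFinite (T : Set (ℕ × ℕ)) (hT : IsLowerSet T) (hfin : T.Finite) :
    YoungDiagram where
  cells := hfin.toFinset
  isLowerSet := by simpa using hT

variable {Y : YoungDiagram} {S : Finset (ℕ × ℕ)}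

theorem mem_removables_s13 {c : ℕ × ℕ} :
    c ∈ Y.removables ↔ c ∈ Y ∧ (c.1 + 1, c.2) ∉ Y ∧ (c.1, c.2 + 1) ∉ Y := by
  simp [removables]

theorem succ_notMem_of_notMem_sdiff (hS : S ⊆ Y.removables) {c : ℕ × ℕ}
    (hc : c ∉ Y.cells \ S) : (c.1 + 1, c.2) ∉ Y ∧ (c.1, c.2 + 1) ∉ Y := by
  by_cases hcS : c ∈ S
  · exact (mem_removables_s13.1 (hS hcS)).2
  · have hcY : c ∉ Y := fun h ↦ hc (Finset.mem_sdiff.2 ⟨(mem_cells c).2 h, hcS⟩)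
    exact ⟨fun h ↦ hcY (Y.isLowerSet (Prod.mk_le_mk.2 ⟨c.1.le_succ, le_rfl⟩) h),
      fun h ↦ hcY (Y.isLowerSet (Prod.mk_le_mk.2 ⟨le_rfl, c.2.le_succ⟩) h)⟩

theorem isLowerSet_sdiff (hS : S ⊆ Y.removables) :
    IsLowerSet (↑(Y.cells \ S) : Set (ℕ × ℕ)) := by
  intro c c' hc'c hc
  obtain ⟨hcY, hcS⟩ := Finset.mem_sdiff.1 hc
  refine Finset.mem_sdiff.2 ⟨Y.isLowerSet hc'c hcY, fun hc'S ↦ ?_⟩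
  have hlt : c' < c := lt_of_le_of_ne hc'c (by rintro rfl; exact hcS hc'S)
  obtain ⟨hx, hy⟩ := (mem_removables_s13.1 (hS hc'S)).2
  rcases Prod.lt_iff.1 hlt with ⟨h1, h2⟩ | ⟨h1, h2⟩
  · exact hx (Y.isLowerSet (Prod.mk_le_mk.2 ⟨h1, h2⟩) hcY)
  · exact hy (Y.isLowerSet (Prod.mk_le_mk.2 ⟨h1, h2⟩) hcY)

end YoungDiagram

section FixedPoints

abbrev IdealPair : Type := Ideal (MvPolynomial (Fin 2) ℂ) × Ideal (MvPolynomial (Fin 2) ℂ)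

def IsMonomialFlag (N n : ℕ) (p : IdealPair) : Prop :=
  IsMonomialIdeal p.1 ∧ IsMonomialIdeal p.2 ∧ p.1 ≤ p.2 ∧
    FiniteDimensional ℂ (MvPolynomial (Fin 2) ℂ ⧸ p.1) ∧
    Module.finrank ℂ (MvPolynomial (Fin 2) ℂ ⧸ p.2) = N ∧
    Module.finrank ℂ (MvPolynomial (Fin 2) ℂ ⧸ p.1) = N + n ∧
    (∀ f ∈ p.2, X (0 : Fin 2) * f ∈ p.1) ∧ (∀ f ∈ p.2, X (1 : Fin 2) * f ∈ p.1)

def IsMarkedYoungDiagram (N n : ℕ) (p : YoungDiagram × Finset (ℕ × ℕ)) : Prop :=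
  p.1.card = N + n ∧ p.2 ⊆ p.1.removables ∧ p.2.card = n

noncomputable def markedDiagramOf (p : IdealPair) (hfin : (staircase p.1).Finite) :
    YoungDiagram × Finset (ℕ × ℕ) :=
  let Y := YoungDiagram.ofFinite (staircase p.1) (isLowerSet_staircase p.1) hfin
  (Y, Y.cells.filter (· ∉ staircase p.2))

noncomputable def flagOf (p : YoungDiagram × Finset (ℕ × ℕ)) : IdealPair :=
  (idealOfStaircase p.1.cells, idealOfStaircase ↑(p.1.cells \ p.2))

variable {N n : ℕ} {p : IdealPair} {hfin : (staircase p.1).Finite}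

theorem mem_markedDiagramOf_fst {c : ℕ × ℕ} :
    c ∈ (markedDiagramOf p hfin).1 ↔ c ∈ staircase p.1 :=
  hfin.mem_toFinset

theorem coe_cells_markedDiagramOf_fst : ↑(markedDiagramOf p hfin).1.cells = staircase p.1 :=
  Set.ext fun _ ↦ mem_markedDiagramOf_fst

theorem coe_markedDiagramOf_snd :
    ↑(markedDiagramOf p hfin).2 = staircase p.1 \ staircase p.2 :=
  Set.ext fun _ ↦ Finset.mem_filter.trans (and_congr_left' hfin.mem_toFinset)

theorem IsMonomialFlag.finite_staircase (h : IsMonomialFlag N n p) : (staircase p.1).Finite :=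
  h.1.finiteDimensional_quotient_iff.1 h.2.2.2.1

theorem IsMonomialFlag.staircase_subset (h : IsMonomialFlag N n p) :
    staircase p.2 ⊆ staircase p.1 :=
  fun _ hc hc' ↦ hc (h.2.2.1 hc')

theorem isMarkedYoungDiagram_markedDiagramOf (h : IsMonomialFlag N n p) :
    IsMarkedYoungDiagram N n (markedDiagramOf p h.finite_staircase) := by
  have hfin := h.finite_staircase
  have hsub := h.staircase_subset
  obtain ⟨hI', hI, -, -, hN, hNn, h0, h1⟩ := h
  have hY : (markedDiagramOf p hfin).1.card = N + n := by
    rw [← hNn, hI'.finrank_quotient, ← coe_cells_markedDiagramOf_fst, Set.ncard_coe_finset]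
  refine ⟨hY, fun c hc ↦ ?_, ?_⟩
  · rw [← Finset.mem_coe, coe_markedDiagramOf_snd] at hc
    simp only [YoungDiagram.mem_removables_s13, mem_markedDiagramOf_fst]
    exact ⟨hc.1, succ_notMem_staircase h0 h1 hc.2⟩
  · rw [← Set.ncard_coe_finset, coe_markedDiagramOf_snd,
      Set.ncard_sdiff' hsub hfin, ← hI'.finrank_quotient,
      ← hI.finrank_quotient, hN, hNn, Nat.add_sub_cancel_left]

theorem isMonomialFlag_flagOf {p : YoungDiagram × Finset (ℕ × ℕ)}
    (h : IsMarkedYoungDiagram N n p) : IsMonomialFlag N n (flagOf p) := by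
  obtain ⟨hY, hS, hSn⟩ := h
  have hcells : IsLowerSet (p.1.cells : Set (ℕ × ℕ)) := p.1.isLowerSet
  have hsucc := X_mul_mem_idealOfStaircase (R := ℂ) hcells
    fun _ hc ↦ YoungDiagram.succ_notMem_of_notMem_sdiff hS hc
  refine ⟨isMonomialIdeal_idealOfStaircase _, isMonomialIdeal_idealOfStaircase _,
    idealOfStaircase_anti (Finset.coe_subset.2 Finset.sdiff_subset),
    (finiteDimensional_quotient_idealOfStaircase_iff hcells).2 p.1.cells.finite_toSet, ?_, ?_,
    hsucc.1, hsucc.2⟩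
  · rw [flagOf, finrank_quotient_idealOfStaircase (YoungDiagram.isLowerSet_sdiff hS),
      Set.ncard_coe_finset, Finset.card_sdiff_of_subset (hS.trans (Finset.filter_subset _ _))]
    change p.1.card - p.2.card = N
    omega
  · rw [flagOf, finrank_quotient_idealOfStaircase hcells, Set.ncard_coe_finset]
    exact hY

theorem flagOf_markedDiagramOf (h : IsMonomialFlag N n p) :
    flagOf (markedDiagramOf p h.finite_staircase) = p := by
  rw [flagOf, Finset.coe_sdiff, coe_markedDiagramOf_snd, coe_cells_markedDiagramOf_fst,
    Set.sdiff_sdiff_cancel_left h.staircase_subset, h.1.idealOfStaircase_staircase,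
    h.2.1.idealOfStaircase_staircase]

theorem markedDiagramOf_flagOf {p : YoungDiagram × Finset (ℕ × ℕ)}
    (hS : p.2 ⊆ p.1.removables) (hfin : (staircase (flagOf p).1).Finite) :
    markedDiagramOf (flagOf p) hfin = p := by
  have hcells : staircase (flagOf p).1 = p.1.cells := staircase_idealOfStaircase p.1.isLowerSet
  have hsdiff : staircase (flagOf p).2 = ↑(p.1.cells \ p.2) :=
    staircase_idealOfStaircase (YoungDiagram.isLowerSet_sdiff hS)
  refine Prod.ext (YoungDiagram.ext (Finset.coe_injective ?_)) (Finset.coe_injective ?_)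
  · rw [coe_cells_markedDiagramOf_fst, hcells]
  · rw [coe_markedDiagramOf_snd, hcells, hsdiff, Finset.coe_sdiff,
      Set.sdiff_sdiff_cancel_left (Finset.coe_subset.2 (hS.trans (Finset.filter_subset _ _)))]

noncomputable def monomialFlagEquiv (N n : ℕ) :
    {p // IsMonomialFlag N n p} ≃ {p // IsMarkedYoungDiagram N n p} where
  toFun q :=
    ⟨markedDiagramOf q.1 q.2.finite_staircase, isMarkedYoungDiagram_markedDiagramOf q.2⟩
  invFun p := ⟨flagOf p.1, isMonomialFlag_flagOf p.2⟩
  left_inv q := Subtype.ext (flagOf_markedDiagramOf q.2)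
  right_inv p := Subtype.ext (markedDiagramOf_flagOf p.2.2.1 _)

end FixedPoints

/-- There is a bijection between (i) pairs `(I', I)` of monomial ideals of `ℂ[x,y]`
with `I' ⊆ I`, `dim_ℂ ℂ[x,y]/I = N`, `dim_ℂ ℂ[x,y]/I' = N + n` (so `dim_ℂ I/I' = n`)
and `I/I'` annihilated by `x` and `y`; and (ii) pairs `(Y,S)` of a Young diagram with
`N + n` boxes and a set `S` of `n` removable boxes of `Y`.  The bijection sends
`(I', I)` to `Y = Y(I') = {(a,b) : x^a y^b ∉ I'}` and `S = {(a,b) : x^a y^b ∈ I \ I'}`. -/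
theorem fixed_points_bijection (N n : ℕ) :
    ∃ e : {p : Ideal (MvPolynomial (Fin 2) ℂ) × Ideal (MvPolynomial (Fin 2) ℂ) //
          IsMonomialIdeal p.1 ∧ IsMonomialIdeal p.2 ∧ p.1 ≤ p.2 ∧
          FiniteDimensional ℂ (MvPolynomial (Fin 2) ℂ ⧸ p.1) ∧
          Module.finrank ℂ (MvPolynomial (Fin 2) ℂ ⧸ p.2) = N ∧
          Module.finrank ℂ (MvPolynomial (Fin 2) ℂ ⧸ p.1) = N + n ∧
          (∀ f ∈ p.2, MvPolynomial.X (0 : Fin 2) * f ∈ p.1) ∧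
          (∀ f ∈ p.2, MvPolynomial.X (1 : Fin 2) * f ∈ p.1)} ≃
        {p : YoungDiagram × Finset (ℕ × ℕ) //
          p.1.card = N + n ∧ p.2 ⊆ p.1.removables ∧ p.2.card = n},
      ∀ q,
        (∀ c : ℕ × ℕ, c ∈ (e q).val.1 ↔
          MvPolynomial.X (0 : Fin 2) ^ c.1 * MvPolynomial.X (1 : Fin 2) ^ c.2 ∉ q.val.1) ∧
        (∀ c : ℕ × ℕ, c ∈ (e q).val.2 ↔
          (MvPolynomial.X (0 : Fin 2) ^ c.1 * MvPolynomial.X (1 : Fin 2) ^ c.2 ∈ q.val.2 ∧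
            MvPolynomial.X (0 : Fin 2) ^ c.1 * MvPolynomial.X (1 : Fin 2) ^ c.2 ∉ q.val.1)) := by
  refine ⟨monomialFlagEquiv N n, fun q ↦ ⟨fun c ↦ ?_, fun c ↦ ?_⟩⟩
  · exact mem_markedDiagramOf_fst
  · rw [← Finset.mem_coe]
    exact (Set.ext_iff.1 coe_markedDiagramOf_snd c).trans (by simp [and_comm])
end
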